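/- arXiv:1312.0802 — 4 statements merged into one kernel-verified Lean document; each statement's English description precedes it below -/
import Mathlib

section
/- Let X be a connected, locally finite, vertex-transitive (homogeneous) one-ended graph. Then through every vertex p of X there passes a bi-infinite geodesic, i.e. there exists a map f : ℤ → V(X) with f(0) = p such that the graph distance satisfies d(f(m), f(n)) = |m − n| for all integers m, n. -/
open SimpleGraph

/-- A graph is vertex-transitive (homogeneous) if any vertex can be carried to
any other vertex by a graph automorphism. -/
def VertexTransitive {V : Type*} (G : SimpleGraph V) : Prop :=
  ∀ u v : V, ∃ φ : G ≃g G, φ u = v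

/-- A graph is one-ended if for every finite set `K` of vertices, the subgraph
induced on the complement of `K` has exactly one infinite connected component. -/
def OneEnded {V : Type*} (G : SimpleGraph V) : Prop :=
  ∀ K : Set V, K.Finite →
    ∃! C : (G.induce Kᶜ).ConnectedComponent, C.supp.Infinite

section Aux

variable {V : Type*} {G : SimpleGraph V}

/-- Consecutive vertices of a walk are at distance at most 1. -/
private lemma aux_dist_getVert_succ_le_one {u v : V} (w : G.Walk u v) (i : ℕ) :
    G.dist (w.getVert i) (w.getVert (i + 1)) ≤ 1 := by
  rcases lt_or_ge i w.length with hi | hi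
  · have h := w.adj_getVert_succ hi
    simpa using SimpleGraph.dist_le h.toWalk
  · rw [w.getVert_of_length_le hi, w.getVert_of_length_le (le_trans hi (Nat.le_succ i)),
      SimpleGraph.dist_self]
    omega

/-- Vertices at positions `i ≤ j` on a walk are at distance at most `j - i`. -/
private lemma aux_dist_getVert_le (hconn : G.Connected) {u v : V} (w : G.Walk u v)
    {i j : ℕ} (hij : i ≤ j) :
    G.dist (w.getVert i) (w.getVert j) ≤ j - i := by
  induction j, hij using Nat.le_induction with
  | base => simp
  | succ j hij ih =>
    calc G.dist (w.getVert i) (w.getVert (j + 1))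
        ≤ G.dist (w.getVert i) (w.getVert j) + G.dist (w.getVert j) (w.getVert (j + 1)) :=
          hconn.dist_triangle
      _ ≤ (j - i) + 1 := Nat.add_le_add ih (aux_dist_getVert_succ_le_one w j)
      _ ≤ j + 1 - i := by omega

/-- On a geodesic (shortest) walk, vertices at positions `i ≤ j` are at distance
exactly `j - i`. -/
private lemma aux_geodesic_getVert (hconn : G.Connected) {u v : V} (w : G.Walk u v)
    (hw : w.length = G.dist u v) {i j : ℕ} (hij : i ≤ j) (hj : j ≤ w.length) :
    G.dist (w.getVert i) (w.getVert j) = j - i := by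
  refine le_antisymm (aux_dist_getVert_le hconn w hij) ?_
  have h1 : G.dist u (w.getVert i) ≤ i := by
    have := aux_dist_getVert_le hconn w (Nat.zero_le i)
    simpa [w.getVert_zero] using this
  have h2 : G.dist (w.getVert j) v ≤ w.length - j := by
    have := aux_dist_getVert_le hconn w hj
    simpa [w.getVert_length] using this
  have h3 : G.dist u v ≤ G.dist u (w.getVert i) +
      (G.dist (w.getVert i) (w.getVert j) + G.dist (w.getVert j) v) :=
    le_trans hconn.dist_triangle (Nat.add_le_add_left hconn.dist_triangle _)
  omega

/-- Automorphisms do not increase distance (in a connected graph). -/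
private lemma aux_iso_dist_le (hconn : G.Connected) (φ : G ≃g G) (u v : V) :
    G.dist (φ u) (φ v) ≤ G.dist u v := by
  obtain ⟨w, hw⟩ := hconn.exists_walk_length_eq_dist u v
  calc G.dist (φ u) (φ v) ≤ (w.map φ.toHom).length := SimpleGraph.dist_le _
    _ = w.length := w.length_map _
    _ = G.dist u v := hw

/-- Automorphisms preserve distance (in a connected graph). -/
private lemma aux_iso_dist (hconn : G.Connected) (φ : G ≃g G) (u v : V) :
    G.dist (φ u) (φ v) = G.dist u v := by
  refine le_antisymm (aux_iso_dist_le hconn φ u v) ?_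
  have := aux_iso_dist_le hconn φ.symm (φ u) (φ v)
  simpa using this

/-- In a connected locally finite graph, balls are finite. -/
private lemma aux_ball_finite (hconn : G.Connected) (hlf : ∀ v : V, (G.neighborSet v).Finite)
    (p : V) : ∀ k : ℕ, {v : V | G.dist p v ≤ k}.Finite := by
  intro k
  induction k with
  | zero =>
    refine Set.Finite.subset (Set.finite_singleton p) ?_
    intro v hv
    simp only [Set.mem_setOf_eq, Nat.le_zero] at hv
    have := (hconn.dist_eq_zero_iff).mp hv
    simp [this]
  | succ k ih =>
    refine Set.Finite.subset (Set.Finite.union ih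
      (Set.Finite.biUnion ih (fun u _ => hlf u))) ?_
    intro v hv
    simp only [Set.mem_setOf_eq] at hv
    rcases le_or_gt (G.dist p v) k with h | h
    · exact Or.inl h
    · have hd : G.dist p v = k + 1 := le_antisymm hv h
      obtain ⟨w, hw⟩ := hconn.exists_walk_length_eq_dist p v
      have hlen : w.length = k + 1 := by rw [hw, hd]
      refine Or.inr ?_
      have hu : G.dist p (w.getVert k) ≤ k := by
        have := aux_dist_getVert_le hconn w (Nat.zero_le k)
        simpa [w.getVert_zero] using this
      have hadj : G.Adj (w.getVert k) v := by
        have hk : k < w.length := by omega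
        have := w.adj_getVert_succ hk
        rwa [w.getVert_of_length_le (by omega : w.length ≤ k + 1)] at this
      exact Set.mem_biUnion hu hadj

/-- In an infinite connected locally finite graph there are vertices arbitrarily far
from any given vertex. -/
private lemma aux_exists_far (hconn : G.Connected) (hlf : ∀ v : V, (G.neighborSet v).Finite)
    [Infinite V] (p : V) (n : ℕ) : ∃ v : V, n ≤ G.dist p v := by
  by_contra h
  push_neg at h
  have : (Set.univ : Set V).Finite := by
    refine Set.Finite.subset (aux_ball_finite hconn hlf p n) ?_
    intro v _
    exact le_of_lt (h v)
  exact Set.infinite_univ this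

end Aux

/-- Through every vertex of a connected, locally finite, vertex-transitive,
one-ended graph there passes a bi-infinite geodesic. -/
theorem biinfinite_geodesic_through_point
    {V : Type*} (G : SimpleGraph V)
    (hconn : G.Connected)
    (hlf : ∀ v : V, (G.neighborSet v).Finite)
    (hvt : VertexTransitive G)
    (hoe : OneEnded G)
    (p : V) :
    ∃ f : ℤ → V, f 0 = p ∧
      ∀ m n : ℤ, G.dist (f m) (f n) = (m - n).natAbs := by
  classical
  -- Step 1: V is infinite, from one-endedness applied to K = ∅.
  have hinf : Infinite V := by
    obtain ⟨C, hC, -⟩ := hoe ∅ Set.finite_empty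
    have h1 : Infinite ↥((∅ : Set V)ᶜ) := by
      have : (Set.univ : Set ↥((∅ : Set V)ᶜ)).Infinite := hC.mono (Set.subset_univ _)
      exact Set.infinite_univ_iff.mp this
    exact Infinite.of_injective (Subtype.val : ↥((∅ : Set V)ᶜ) → V) Subtype.val_injective
  -- Step 2: for each n, a finite geodesic segment of radius n centered at p.
  have hseg : ∀ n : ℕ, ∃ g : ℤ → V, g 0 = p ∧
      (∀ i : ℤ, G.dist p (g i) ≤ i.natAbs) ∧
      (∀ m k : ℤ, m.natAbs ≤ n → k.natAbs ≤ n →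
        G.dist (g m) (g k) = (m - k).natAbs) := by
    intro n
    obtain ⟨v, hv⟩ := aux_exists_far hconn hlf p (2 * n)
    obtain ⟨w, hw⟩ := hconn.exists_walk_length_eq_dist p v
    have hlen : 2 * n ≤ w.length := by rw [hw]; exact hv
    obtain ⟨φ, hφ⟩ := hvt (w.getVert n) p
    set g : ℤ → V := fun i => if i.natAbs ≤ n then φ (w.getVert (i + n).toNat) else p with hg
    have key : ∀ m k : ℤ, m.natAbs ≤ n → k.natAbs ≤ n →
        G.dist (g m) (g k) = (m - k).natAbs := by
      have main : ∀ m k : ℤ, k ≤ m → m.natAbs ≤ n → k.natAbs ≤ n →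
          G.dist (g m) (g k) = (m - k).natAbs := by
        intro m k hkm hm hk
        have hgm : g m = φ (w.getVert (m + n).toNat) := by simp [hg, hm]
        have hgk : g k = φ (w.getVert (k + n).toNat) := by simp [hg, hk]
        rw [hgm, hgk, aux_iso_dist hconn, SimpleGraph.dist_comm]
        have hij : (k + n).toNat ≤ (m + n).toNat := by omega
        have hj : (m + n).toNat ≤ w.length := by omega
        rw [aux_geodesic_getVert hconn w hw hij hj]
        omega
      intro m k hm hk
      rcases le_total k m with h | h
      · exact main m k h hm hk
      · rw [SimpleGraph.dist_comm, main k m h hk hm]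
        omega
    have hg0 : g 0 = p := by
      have : g 0 = φ (w.getVert n) := by simp [hg]
      rw [this, hφ]
    refine ⟨g, hg0, ?_, key⟩
    intro i
    by_cases hi : i.natAbs ≤ n
    · have := key i 0 hi (by simp)
      rw [hg0] at this
      rw [SimpleGraph.dist_comm, this]
      simp
    · have : g i = p := by simp [hg, hi]
      simp [this, SimpleGraph.dist_self]
  choose gseq hg0 hball hgeo using hseg
  -- Step 3: extract a limit along a nonprincipal ultrafilter on ℕ.
  set U : Ultrafilter ℕ := Filter.hyperfilter ℕ with hU
  have hlim : ∀ i : ℤ, ∃ v : V, G.dist p v ≤ i.natAbs ∧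
      {n : ℕ | gseq n i = v} ∈ U := by
    intro i
    have hS : {v : V | G.dist p v ≤ i.natAbs}.Finite := aux_ball_finite hconn hlf p _
    have hcov : (⋃ v ∈ {v : V | G.dist p v ≤ i.natAbs}, {n : ℕ | gseq n i = v}) ∈ U := by
      have : (⋃ v ∈ {v : V | G.dist p v ≤ i.natAbs}, {n : ℕ | gseq n i = v}) = Set.univ := by
        ext n
        simp only [Set.mem_iUnion, Set.mem_setOf_eq, Set.mem_univ, iff_true]
        exact ⟨gseq n i, hball n i, rfl⟩
      rw [this]
      exact Filter.univ_mem
    obtain ⟨v, hv, hv'⟩ := (Ultrafilter.finite_biUnion_mem_iff hS).mp hcov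
    exact ⟨v, hv, hv'⟩
  choose f hfball hfmem using hlim
  have hcof : ∀ N : ℕ, {n : ℕ | N ≤ n} ∈ U := by
    intro N
    refine Filter.hyperfilter_le_cofinite ?_
    have : {n : ℕ | N ≤ n}ᶜ ⊆ {n : ℕ | n < N} := by
      intro n hn
      simpa using hn
    exact Set.Finite.subset (Set.finite_lt_nat N) this
  refine ⟨f, ?_, ?_⟩
  · -- f 0 = p
    have hmem := hfmem 0
    obtain ⟨n, hn⟩ := Filter.nonempty_of_mem hmem
    have : gseq n 0 = f 0 := hn
    rw [← this, hg0 n]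
  · intro m k
    have hA := hfmem m
    have hB := hfmem k
    have hC := hcof (max m.natAbs k.natAbs)
    have hmem : ({n : ℕ | gseq n m = f m} ∩ {n : ℕ | gseq n k = f k} ∩
        {n : ℕ | max m.natAbs k.natAbs ≤ n}) ∈ U :=
      Filter.inter_mem (Filter.inter_mem hA hB) hC
    obtain ⟨n, ⟨h1, h2⟩, h3⟩ := Filter.nonempty_of_mem hmem
    have hm : m.natAbs ≤ n := le_trans (le_max_left _ _) h3
    have hk : k.natAbs ≤ n := le_trans (le_max_right _ _) h3
    have := hgeo n m k hm hk
    rwa [h1, h2] at this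
end

section
/- Let Γ be an infinite group generated by a finite set S, and let d denote the word metric on Γ, i.e. the graph distance in the Cayley graph of (Γ,S). Then through every element g ∈ Γ there passes a bi-infinite geodesic: there exists a map f : ℤ → Γ with f(0) = g and d(f(m), f(n)) = |m − n| for all integers m, n. -/
open SimpleGraph

/-- The Cayley graph of a group `Γ` with respect to a generating set `S`:
`g` is adjacent to `h` iff `g ≠ h` and `g⁻¹ * h ∈ S ∪ S⁻¹`. -/
def cayleyGraph (Γ : Type*) [Group Γ] (S : Set Γ) : SimpleGraph Γ where
  Adj g h := g ≠ h ∧ g⁻¹ * h ∈ S ∪ S⁻¹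
  symm := by
    constructor
    rintro g h ⟨hne, hmem⟩
    refine ⟨hne.symm, ?_⟩
    rcases hmem with hS | hSinv
    · right
      rw [Set.mem_inv]
      simpa [mul_inv_rev] using hS
    · left
      rw [Set.mem_inv] at hSinv
      simpa [mul_inv_rev] using hSinv
  loopless := by
    constructor
    rintro g ⟨hne, -⟩
    exact hne rfl

section GraphLemmas

variable {V : Type*} {G : SimpleGraph V}

/-- Along any walk, the distance between the `a`-th and `b`-th vertices is at most `b - a`. -/
lemma walk_dist_getVert_le (hc : G.Connected) {u v : V} (w : G.Walk u v)
    {a b : ℕ} (hab : a ≤ b) :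
    G.dist (w.getVert a) (w.getVert b) ≤ b - a := by
  induction b, hab using Nat.le_induction with
  | base => simp
  | succ b hab ih =>
    have h1 : G.dist (w.getVert b) (w.getVert (b + 1)) ≤ 1 := by
      by_cases hb : b < w.length
      · exact (dist_eq_one_iff_adj.2 (w.adj_getVert_succ hb)).le
      · push_neg at hb
        rw [w.getVert_of_length_le hb, w.getVert_of_length_le (hb.trans (Nat.le_succ b))]
        simp [SimpleGraph.dist_self]
    calc G.dist (w.getVert a) (w.getVert (b + 1))
        ≤ G.dist (w.getVert a) (w.getVert b) + G.dist (w.getVert b) (w.getVert (b + 1)) :=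
          hc.dist_triangle
      _ ≤ (b - a) + 1 := Nat.add_le_add ih h1
      _ ≤ (b + 1) - a := by omega

/-- On a geodesic walk, distances between vertices are exactly the index differences. -/
lemma geodesic_dist_getVert (hc : G.Connected) {u v : V} (w : G.Walk u v)
    (hw : w.length = G.dist u v) {a b : ℕ} (hab : a ≤ b) (hb : b ≤ w.length) :
    G.dist (w.getVert a) (w.getVert b) = b - a := by
  refine le_antisymm (walk_dist_getVert_le hc w hab) ?_
  have h1 : G.dist u (w.getVert a) ≤ a := by
    simpa using walk_dist_getVert_le hc w (Nat.zero_le a)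
  have h2 : G.dist (w.getVert b) v ≤ w.length - b := by
    have := walk_dist_getVert_le hc w hb
    simpa [w.getVert_length] using this
  have h3 : G.dist u v ≤ G.dist u (w.getVert a) + G.dist (w.getVert a) (w.getVert b)
      + G.dist (w.getVert b) v := (hc.dist_triangle).trans (Nat.add_le_add_right hc.dist_triangle _)
  omega

/-- Finiteness of balls in a locally finite connected graph. -/
lemma ball_finite (hc : G.Connected) (hnf : ∀ x : V, (G.neighborSet x).Finite) (u : V) :
    ∀ n : ℕ, {x : V | G.dist u x ≤ n}.Finite := by
  intro n
  induction n with
  | zero =>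
    refine Set.Finite.subset (Set.finite_singleton u) ?_
    intro x hx
    simp only [Set.mem_setOf_eq, Nat.le_zero] at hx
    exact ((hc.dist_eq_zero_iff).1 hx).symm ▸ rfl
  | succ n ih =>
    refine Set.Finite.subset (ih.union (Set.Finite.biUnion ih (fun y _ => hnf y))) ?_
    intro x hx
    simp only [Set.mem_setOf_eq] at hx
    by_cases hxn : G.dist u x ≤ n
    · exact Or.inl hxn
    · have hd : G.dist u x = n + 1 := by omega
      obtain ⟨w, hw⟩ := (hc.preconnected u x).exists_walk_length_eq_dist
      rw [hd] at hw
      refine Or.inr ?_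
      refine Set.mem_biUnion (show G.dist u (w.getVert n) ≤ n from ?_) ?_
      · simpa using walk_dist_getVert_le hc w (Nat.zero_le n)
      · have := w.adj_getVert_succ (by omega : n < w.length)
        rw [show n + 1 = w.length from hw.symm, w.getVert_length] at this
        exact this

/-- Intermediate value: distances from `u` along a walk hit every intermediate value. -/
lemma exists_dist_eq_of_walk (hc : G.Connected) {u : V} :
    ∀ {a b : V} (_ : G.Walk a b) (k : ℕ), G.dist u a ≤ k → k ≤ G.dist u b → ∃ c, G.dist u c = k := by
  intro a b w
  induction w with
  | @nil a => exact fun k h1 h2 => ⟨a, le_antisymm h1 h2⟩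
  | @cons a y b h p ih =>
    intro k h1 h2
    by_cases hy : G.dist u y ≤ k
    · exact ih k hy h2
    · refine ⟨a, ?_⟩
      have : G.dist u y ≤ G.dist u a + G.dist a y := hc.dist_triangle
      rw [dist_eq_one_iff_adj.2 h] at this
      omega

/-- Spheres of all radii are nonempty in a locally finite connected infinite graph. -/
lemma sphere_nonempty [Infinite V] (hc : G.Connected) (hnf : ∀ x : V, (G.neighborSet x).Finite)
    (u : V) (n : ℕ) : ∃ x : V, G.dist u x = n := by
  obtain ⟨z, hz⟩ := (ball_finite hc hnf u n).infinite_compl.nonempty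
  simp only [Set.mem_compl_iff, Set.mem_setOf_eq, not_le] at hz
  exact exists_dist_eq_of_walk hc ((hc.preconnected u z).some) n (by simp [SimpleGraph.dist_self]) hz.le
end GraphLemmas

section Cayley
variable {Γ : Type*} [Group Γ] {S : Set Γ}

lemma cayley_adj_mul_left (g x y : Γ) :
    (cayleyGraph Γ S).Adj (g * x) (g * y) ↔ (cayleyGraph Γ S).Adj x y := by
  have he : (g * x)⁻¹ * (g * y) = x⁻¹ * y := by group
  constructor
  · rintro ⟨h1, h2⟩
    rw [he] at h2
    exact ⟨fun h => h1 (by rw [h]), h2⟩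
  · rintro ⟨h1, h2⟩
    exact ⟨fun h => h1 (mul_left_cancel h), by rw [he]; exact h2⟩

/-- Left multiplication as a graph homomorphism of the Cayley graph. -/
def mulLeftHom (g : Γ) : cayleyGraph Γ S →g cayleyGraph Γ S where
  toFun x := g * x
  map_rel' := fun h => (cayley_adj_mul_left g _ _).2 h

@[simp] lemma mulLeftHom_apply (g x : Γ) : (mulLeftHom (S := S) g) x = g * x := rfl

lemma cayley_dist_mul_left (hc : (cayleyGraph Γ S).Connected) (g x y : Γ) :
    (cayleyGraph Γ S).dist (g * x) (g * y) = (cayleyGraph Γ S).dist x y := by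
  have key : ∀ (a u v : Γ), (cayleyGraph Γ S).dist (a * u) (a * v) ≤
      (cayleyGraph Γ S).dist u v := by
    intro a u v
    obtain ⟨w, hw⟩ := (hc.preconnected u v).exists_walk_length_eq_dist
    have := SimpleGraph.dist_le (w.map (mulLeftHom a))
    rwa [SimpleGraph.Walk.length_map, hw] at this
  refine le_antisymm (key g x y) ?_
  have := key g⁻¹ (g * x) (g * y)
  simpa using this

lemma cayley_connected (hgen : Subgroup.closure S = ⊤) : (cayleyGraph Γ S).Connected := by
  have hr : ∀ x : Γ, (cayleyGraph Γ S).Reachable 1 x := by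
    intro x
    have hx : x ∈ Subgroup.closure S := hgen ▸ Subgroup.mem_top x
    induction hx using Subgroup.closure_induction with
    | mem s hs =>
      by_cases h1 : s = 1
      · subst h1; exact Reachable.refl 1
      · exact SimpleGraph.Adj.reachable ⟨fun h => h1 h.symm, by simpa using Or.inl hs⟩
    | one => exact Reachable.refl (1 : Γ)
    | mul a b _ _ ha hb =>
      refine ha.trans ?_
      have := hb.map (mulLeftHom (S := S) a)
      simpa using this
    | inv a _ ha =>
      have := ha.map (mulLeftHom (S := S) a⁻¹)
      simp only [mulLeftHom_apply, mul_one, inv_mul_cancel] at this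
      exact this.symm
  exact (connected_iff _).2 ⟨fun x y => (hr x).symm.trans (hr y), ⟨1⟩⟩

lemma cayley_neighbor_finite (hSfin : S.Finite) (x : Γ) :
    ((cayleyGraph Γ S).neighborSet x).Finite := by
  refine Set.Finite.subset (((hSfin.union hSfin.inv).image (fun s => x * s))) ?_
  rintro y ⟨-, hy⟩
  exact ⟨x⁻¹ * y, hy, by group⟩
end Cayley

/-- Through every element of an infinite finitely generated group there passes a
bi-infinite geodesic for the word metric (the graph distance in the Cayley graph). -/
theorem biinfinite_geodesic_through_group_element
    {Γ : Type*} [Group Γ] [Infinite Γ]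
    (S : Set Γ) (hSfin : S.Finite) (hgen : Subgroup.closure S = ⊤)
    (g : Γ) :
    ∃ f : ℤ → Γ, f 0 = g ∧
      ∀ m n : ℤ, (cayleyGraph Γ S).dist (f m) (f n) = (m - n).natAbs := by
  classical
  set G := cayleyGraph Γ S with hG
  have hc : G.Connected := cayley_connected hgen
  have hnf : ∀ x : Γ, (G.neighborSet x).Finite := cayley_neighbor_finite hSfin
  have H : ∀ N : ℕ, ∃ p : ℤ → Γ, p 0 = 1 ∧
      ∀ i j : ℤ, i.natAbs ≤ N → j.natAbs ≤ N → G.dist (p i) (p j) = (i - j).natAbs := by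
    intro N
    obtain ⟨x, hx⟩ := sphere_nonempty hc hnf 1 (2 * N)
    obtain ⟨w, hw⟩ := (hc.preconnected 1 x).exists_walk_length_eq_dist
    have hlen : w.length = 2 * N := by rw [hw, hx]
    have key : ∀ i j : ℤ, j ≤ i → i.natAbs ≤ N → j.natAbs ≤ N →
        G.dist (w.getVert ((N : ℤ) + i).toNat) (w.getVert ((N : ℤ) + j).toNat)
          = (i - j).natAbs := by
      intro i j hji hi hj
      have hab : ((N : ℤ) + j).toNat ≤ ((N : ℤ) + i).toNat := by omega
      have hb : ((N : ℤ) + i).toNat ≤ w.length := by omega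
      rw [SimpleGraph.dist_comm, geodesic_dist_getVert hc w hw hab hb]
      omega
    refine ⟨fun k => (w.getVert N)⁻¹ * w.getVert ((N : ℤ) + k).toNat, by simp, ?_⟩
    intro i j hi hj
    show G.dist ((w.getVert N)⁻¹ * w.getVert ((N : ℤ) + i).toNat)
        ((w.getVert N)⁻¹ * w.getVert ((N : ℤ) + j).toNat) = (i - j).natAbs
    rw [cayley_dist_mul_left hc]
    rcases le_total j i with hji | hij
    · exact key i j hji hi hj
    · rw [SimpleGraph.dist_comm]
      rw [key j i hij hj hi]
      omega
  choose F hF0 hF using H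
  obtain ⟨U, hU⟩ := Filter.exists_ultrafilter_le (Filter.cofinite (α := ℕ))
  have hcof : ∀ c : ℕ, {N : ℕ | c ≤ N} ∈ U := by
    intro c
    refine hU ?_
    rw [Filter.mem_cofinite]
    refine Set.Finite.subset (Set.finite_lt_nat c) ?_
    intro N hN
    simpa using hN
  have hlim : ∀ k : ℤ, ∃ v : Γ, {N : ℕ | F N k = v} ∈ U := by
    intro k
    have hB : {x : Γ | G.dist 1 x ≤ k.natAbs}.Finite := ball_finite hc hnf 1 _
    have hsub : {N : ℕ | k.natAbs ≤ N} ⊆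
        ⋃ v ∈ {x : Γ | G.dist 1 x ≤ k.natAbs}, {N : ℕ | F N k = v} := by
      intro N hN
      have hd := hF N k 0 hN (by simp)
      refine Set.mem_biUnion ?_ rfl
      rw [hF0 N] at hd
      rw [Set.mem_setOf_eq, SimpleGraph.dist_comm, hd]
      simp
    have hmem : (⋃ v ∈ {x : Γ | G.dist 1 x ≤ k.natAbs}, {N : ℕ | F N k = v}) ∈ U :=
      Filter.mem_of_superset (hcof k.natAbs) hsub
    obtain ⟨v, _, hvU⟩ := (Ultrafilter.finite_biUnion_mem_iff hB).1 hmem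
    exact ⟨v, hvU⟩
  choose φ hφ using hlim
  refine ⟨fun k => g * φ k, ?_, ?_⟩
  · obtain ⟨N, hN⟩ := Ultrafilter.nonempty_of_mem (hφ 0)
    rw [Set.mem_setOf_eq] at hN
    show g * φ 0 = g
    rw [← hN, hF0 N, mul_one]
  · intro m n
    have hmem : ({N : ℕ | F N m = φ m} ∩ {N : ℕ | F N n = φ n}
        ∩ ({N : ℕ | m.natAbs ≤ N} ∩ {N : ℕ | n.natAbs ≤ N})) ∈ U :=
      Filter.inter_mem (Filter.inter_mem (hφ m) (hφ n))
        (Filter.inter_mem (hcof m.natAbs) (hcof n.natAbs))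
    obtain ⟨N, ⟨⟨h1, h2⟩, h3, h4⟩⟩ := Ultrafilter.nonempty_of_mem hmem
    rw [Set.mem_setOf_eq] at h1 h2 h3 h4
    have : (cayleyGraph Γ S).dist (g * φ m) (g * φ n) = G.dist (φ m) (φ n) :=
      cayley_dist_mul_left hc g (φ m) (φ n)
    rw [this, ← h1, ← h2]
    exact hF N m n h3 h4
end

section
/- Let X be a connected, locally finite, vertex-transitive (homogeneous) one-ended graph, let v₀ be a vertex of X, and let r be a natural number. Then every finite connected component of the subgraph induced on the complement of the ball B(v₀,r) is contained in the ball B(v₀,2r); equivalently, every vertex lying in a finite connected component of the complement of B(v₀,r) is at distance at most 2r from v₀. -/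
open SimpleGraph

/-- Reachability in `G` by a walk avoiding the set `S`. -/
def ReachAvoid {V : Type*} (G : SimpleGraph V) (S : Set V) (a b : V) : Prop :=
  ∃ p : G.Walk a b, ∀ w ∈ p.support, w ∉ S

namespace ReachAvoid

variable {V : Type*} {G : SimpleGraph V} {S : Set V} {a b c : V}

lemma notMem_left (h : ReachAvoid G S a b) : a ∉ S := by
  obtain ⟨p, hp⟩ := h; exact hp a p.start_mem_support

lemma notMem_right (h : ReachAvoid G S a b) : b ∉ S := by
  obtain ⟨p, hp⟩ := h; exact hp b p.end_mem_support

lemma refl (ha : a ∉ S) : ReachAvoid G S a a :=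
  ⟨SimpleGraph.Walk.nil, by simpa using ha⟩

lemma symm (h : ReachAvoid G S a b) : ReachAvoid G S b a := by
  obtain ⟨p, hp⟩ := h
  exact ⟨p.reverse, fun w hw => hp w (by simpa [SimpleGraph.Walk.support_reverse] using hw)⟩

lemma trans (h1 : ReachAvoid G S a b) (h2 : ReachAvoid G S b c) : ReachAvoid G S a c := by
  obtain ⟨p, hp⟩ := h1; obtain ⟨q, hq⟩ := h2
  refine ⟨p.append q, fun w hw => ?_⟩
  rcases (SimpleGraph.Walk.mem_support_append_iff _ _).1 hw with h | h
  · exact hp w h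
  · exact hq w h

end ReachAvoid

section Aux

variable {V : Type*} {G : SimpleGraph V}

/-- A walk in an induced subgraph yields a walk in the ambient graph with support
inside the inducing set. -/
lemma exists_walk_of_induce_walk {s : Set V} :
    ∀ {a b : ↥s} (_ : (G.induce s).Walk a b),
      ∃ p : G.Walk a.val b.val, ∀ w ∈ p.support, w ∈ s := by
  intro a b q
  induction q with
  | nil => exact ⟨SimpleGraph.Walk.nil, by simpa using a.2⟩
  | @cons u v w h q ih =>
    obtain ⟨p, hp⟩ := ih
    refine ⟨SimpleGraph.Walk.cons h p, fun z hz => ?_⟩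
    rcases (List.mem_cons.1 hz : z = u.val ∨ z ∈ p.support) with rfl | hz'
    · exact u.2
    · exact hp z hz'

/-- A walk in the ambient graph with support inside `s` yields reachability in the
induced subgraph. -/
lemma induce_reachable_of_walk {s : Set V} {a b : V} (p : G.Walk a b)
    (hp : ∀ w ∈ p.support, w ∈ s) (ha : a ∈ s) (hb : b ∈ s) :
    (G.induce s).Reachable ⟨a, ha⟩ ⟨b, hb⟩ := by
  induction p with
  | nil => rfl
  | @cons u v w h q ih =>
    have hv : v ∈ s := hp v (by simp)
    have : (G.induce s).Adj ⟨u, ha⟩ ⟨v, hv⟩ := by simpa using h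
    exact this.reachable.trans (ih (fun z hz => hp z (by simp [hz])) hv hb)

/-- The vertex set of the connected component of `x` in the induced graph on `Sᶜ`,
viewed in the ambient vertex set, is the set of vertices reaching `x` avoiding `S`. -/
lemma cset_eq_image (S : Set V) (x : ↥Sᶜ) :
    {y : V | ReachAvoid G S y (x : V)} =
      Subtype.val '' ((G.induce Sᶜ).connectedComponentMk x).supp := by
  ext y
  constructor
  · rintro ⟨p, hp⟩
    have hy : y ∈ Sᶜ := hp y p.start_mem_support
    refine ⟨⟨y, hy⟩, ?_, rfl⟩
    rw [SimpleGraph.ConnectedComponent.mem_supp_iff, SimpleGraph.ConnectedComponent.eq]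
    exact induce_reachable_of_walk p (fun w hw => hp w hw) hy x.2
  · rintro ⟨⟨y', hy'⟩, hy'supp, rfl⟩
    rw [SimpleGraph.ConnectedComponent.mem_supp_iff, SimpleGraph.ConnectedComponent.eq]
      at hy'supp
    obtain ⟨q⟩ := hy'supp
    obtain ⟨p, hp⟩ := exists_walk_of_induce_walk q
    exact ⟨p, hp⟩

/-- Graph isomorphisms preserve the distance in a connected graph. -/
lemma iso_dist_eq (hconn : G.Connected) (φ : G ≃g G) (a b : V) :
    G.dist (φ a) (φ b) = G.dist a b := by
  have key : ∀ (ψ : G ≃g G) (u v : V), G.dist (ψ u) (ψ v) ≤ G.dist u v := by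
    intro ψ u v
    obtain ⟨p, hp⟩ := hconn.exists_walk_length_eq_dist u v
    calc G.dist (ψ u) (ψ v) ≤ (p.map ψ.toHom).length := SimpleGraph.dist_le _
      _ = p.length := by simp
      _ = G.dist u v := hp
  refine le_antisymm (key φ a b) ?_
  have := key φ.symm (φ a) (φ b)
  simpa using this

/-- Balls are finite in a connected locally finite graph. -/
lemma ball_finite_s3 (hconn : G.Connected) (hlf : ∀ v : V, (G.neighborSet v).Finite)
    (v₀ : V) : ∀ r : ℕ, {u : V | G.dist v₀ u ≤ r}.Finite := by
  intro r
  induction r with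
  | zero =>
    refine Set.Finite.subset (Set.finite_singleton v₀) ?_
    intro u hu
    simp only [Set.mem_setOf_eq, Nat.le_zero] at hu
    have := (hconn.dist_eq_zero_iff (u := v₀) (v := u)).1 hu
    simp [this.symm]
  | succ n ih =>
    refine Set.Finite.subset
      ((ih.union (ih.biUnion (fun w _ => hlf w)))) ?_
    intro u hu
    simp only [Set.mem_setOf_eq] at hu
    obtain ⟨p, hp⟩ := hconn.exists_walk_length_eq_dist u v₀
    cases p with
    | nil =>
      left
      simp [SimpleGraph.dist_self]
    | @cons _ w _ h q =>
      have hq : G.dist v₀ w ≤ n := by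
        have h1 : G.dist w v₀ ≤ q.length := SimpleGraph.dist_le q
        have h2 : q.length + 1 = G.dist u v₀ := by simpa using hp
        have h3 : G.dist u v₀ ≤ n + 1 := by rwa [SimpleGraph.dist_comm]
        rw [SimpleGraph.dist_comm]
        omega
      right
      exact Set.mem_biUnion hq h.symm

/-- The core contradiction: if `xv` is the image of `v₀` under an automorphism, lies
in a finite component of the complement of the ball of radius `r` around `v₀`, and
is at distance more than `2r` from `v₀`, we get a contradiction. -/
lemma aux_contra (G : SimpleGraph V)
    (hconn : G.Connected) (hlf : ∀ v : V, (G.neighborSet v).Finite)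
    (hoe : OneEnded G) (v₀ xv : V) (r : ℕ) (φ : G ≃g G) (hφ : φ v₀ = xv)
    (hfin : {y : V | ReachAvoid G {u : V | G.dist v₀ u ≤ r} y xv}.Finite)
    (hgt : 2 * r < G.dist v₀ xv) : False := by
  classical
  set B : Set V := {u : V | G.dist v₀ u ≤ r} with hBdef
  set S' : Set V := {u : V | G.dist xv u ≤ r} with hS'def
  have hxB : xv ∉ B := by
    simp only [hBdef, Set.mem_setOf_eq]; omega
  -- S' and B are disjoint
  have hS'B : ∀ u, u ∈ S' → u ∉ B := by
    intro u huS huB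
    have htri : G.dist v₀ xv ≤ G.dist v₀ u + G.dist u xv := hconn.dist_triangle
    have h1 : G.dist u xv ≤ r := by
      rw [SimpleGraph.dist_comm]
      simpa only [hS'def, Set.mem_setOf_eq] using huS
    have h2 : G.dist v₀ u ≤ r := by simpa only [hBdef, Set.mem_setOf_eq] using huB
    omega
  -- points of S' reach xv avoiding B
  have hS'C : ∀ u ∈ S', ReachAvoid G B u xv := by
    intro u hu
    have hu' : G.dist xv u ≤ r := by simpa only [hS'def, Set.mem_setOf_eq] using hu
    obtain ⟨p, hp⟩ := hconn.exists_walk_length_eq_dist xv u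
    refine ReachAvoid.symm ⟨p, fun w hw => ?_⟩
    refine hS'B w ?_
    have h1 : G.dist xv w ≤ (p.takeUntil w hw).length := SimpleGraph.dist_le _
    have h2 : (p.takeUntil w hw).length ≤ p.length := SimpleGraph.Walk.length_takeUntil_le p hw
    have h3 : p.length = G.dist xv u := hp
    simp only [hS'def, Set.mem_setOf_eq]
    omega
  -- points of B reach v₀ avoiding S'
  have hBE : ∀ u ∈ B, ReachAvoid G S' u v₀ := by
    intro u hu
    have hu' : G.dist v₀ u ≤ r := by simpa only [hBdef, Set.mem_setOf_eq] using hu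
    obtain ⟨p, hp⟩ := hconn.exists_walk_length_eq_dist v₀ u
    refine ReachAvoid.symm ⟨p, fun w hw => ?_⟩
    intro hwS
    refine hS'B w hwS ?_
    have h1 : G.dist v₀ w ≤ (p.takeUntil w hw).length := SimpleGraph.dist_le _
    have h2 : (p.takeUntil w hw).length ≤ p.length := SimpleGraph.Walk.length_takeUntil_le p hw
    have h3 : p.length = G.dist v₀ u := hp
    simp only [hBdef, Set.mem_setOf_eq]
    omega
  have hv₀B : v₀ ∈ B := by
    simp only [hBdef, Set.mem_setOf_eq, SimpleGraph.dist_self]; omega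
  -- coverage: every vertex reaches v₀ avoiding S', or reaches xv avoiding B
  have cover_step : ∀ {y z : V} (_ : G.Walk y z),
      (ReachAvoid G S' z v₀ ∨ ReachAvoid G B z xv) →
      (ReachAvoid G S' y v₀ ∨ ReachAvoid G B y xv) := by
    intro y z p
    induction p with
    | nil => exact id
    | @cons u v w h q ih =>
      intro hz
      rcases ih hz with ⟨p', hp'⟩ | ⟨p', hp'⟩
      · by_cases huS : u ∈ S'
        · exact Or.inr (hS'C u huS)
        · refine Or.inl ⟨SimpleGraph.Walk.cons h p', fun z' hz' => ?_⟩
          rcases (by simpa using hz' : z' = u ∨ z' ∈ p'.support) with rfl | hz''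
          · exact huS
          · exact hp' z' hz''
      · by_cases huB : u ∈ B
        · exact Or.inl (hBE u huB)
        · refine Or.inr ⟨SimpleGraph.Walk.cons h p', fun z' hz' => ?_⟩
          rcases (by simpa using hz' : z' = u ∨ z' ∈ p'.support) with rfl | hz''
          · exact huB
          · exact hp' z' hz''
  have cover : ∀ (y : V), ReachAvoid G S' y v₀ ∨ ReachAvoid G B y xv := by
    intro y
    obtain ⟨p⟩ := hconn.preconnected y v₀
    exact cover_step p (Or.inl (hBE v₀ hv₀B))
  -- the component of xv, as a set of vertices of G
  set Cset : Set V := {y : V | ReachAvoid G B y xv} with hCdef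
  have hxC : xv ∈ Cset := ReachAvoid.refl hxB
  have hCfin : Cset.Finite := hfin
  -- membership transport along φ
  have hmem : ∀ w : V, w ∈ S' ↔ φ.symm w ∈ B := by
    intro w
    have hd : G.dist (φ v₀) (φ (φ.symm w)) = G.dist v₀ (φ.symm w) := iso_dist_eq hconn φ _ _
    simp only [RelIso.apply_symm_apply, hφ] at hd
    simp only [hS'def, hBdef, Set.mem_setOf_eq, hd]
  -- transporting walks along φ
  have hmap : ∀ a b : V, ReachAvoid G B a b → ReachAvoid G S' (φ a) (φ b) := by
    rintro a b ⟨p, hp⟩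
    refine ⟨p.map φ.toHom, fun w hw => ?_⟩
    rw [SimpleGraph.Walk.support_map] at hw
    obtain ⟨u, hu, rfl⟩ := List.mem_map.1 hw
    intro hwS
    have : φ.symm (φ u) ∈ B := (hmem _).1 hwS
    simp only [RelIso.symm_apply_apply] at this
    exact hp u hu this
  have hmapInv : ∀ a b : V, ReachAvoid G S' a b → ReachAvoid G B (φ.symm a) (φ.symm b) := by
    rintro a b ⟨p, hp⟩
    refine ⟨p.map φ.symm.toHom, fun w hw => ?_⟩
    rw [SimpleGraph.Walk.support_map] at hw
    obtain ⟨u, hu, rfl⟩ := List.mem_map.1 hw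
    intro hwB
    refine hp u hu ?_
    exact (hmem u).2 hwB
  -- the translated component
  set Dset : Set V := {y : V | ReachAvoid G S' y (φ xv)} with hDdef
  have hDim : Dset = φ '' Cset := by
    ext y
    constructor
    · intro hy
      refine ⟨φ.symm y, ?_, by simp⟩
      have := hmapInv y (φ xv) hy
      simp only [RelIso.symm_apply_apply] at this; exact this
    · rintro ⟨z, hz, rfl⟩
      exact hmap z xv hz
  have hDfin : Dset.Finite := by
    rw [hDim]; exact hCfin.image _
  have hDcard : Dset.ncard = Cset.ncard := by
    rw [hDim]; exact Set.ncard_image_of_injective _ φ.injective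
  -- the infinite component avoiding B gives infinitely many points in Eset
  have hBfin : B.Finite := by rw [hBdef]; exact ball_finite_s3 hconn hlf v₀ r
  obtain ⟨D₀, hD₀inf, -⟩ := hoe B hBfin
  have hCim : Cset = Subtype.val ''
      ((G.induce Bᶜ).connectedComponentMk (⟨xv, hxB⟩ : ↥Bᶜ)).supp :=
    cset_eq_image B ⟨xv, hxB⟩
  have hsuppfin : (((G.induce Bᶜ).connectedComponentMk (⟨xv, hxB⟩ : ↥Bᶜ)).supp).Finite := by
    apply Set.Finite.of_finite_image (f := Subtype.val)
    · rw [← hCim]; exact hCfin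
    · exact Set.injOn_of_injective Subtype.val_injective
  have hD₀ne : D₀ ≠ (G.induce Bᶜ).connectedComponentMk (⟨xv, hxB⟩ : ↥Bᶜ) := by
    intro hEq
    rw [hEq] at hD₀inf
    exact hD₀inf hsuppfin
  set Eset : Set V := {y : V | ReachAvoid G S' y v₀} with hEdef
  have hD₀sub : Subtype.val '' D₀.supp ⊆ Eset := by
    rintro y ⟨⟨y', hy'⟩, hy'supp, rfl⟩
    rcases cover y' with h | h
    · exact h
    · exfalso
      have hyC : y' ∈ Cset := h
      rw [hCim] at hyC
      obtain ⟨w, hwsupp, hwy⟩ := hyC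
      have hw' : w = ⟨y', hy'⟩ := Subtype.ext hwy
      rw [hw'] at hwsupp
      rw [SimpleGraph.ConnectedComponent.mem_supp_iff] at hwsupp hy'supp
      exact hD₀ne (by rw [← hy'supp, hwsupp])
  have hEinf : Eset.Infinite := by
    refine Set.Infinite.mono hD₀sub ?_
    exact Set.Infinite.image (Set.injOn_of_injective Subtype.val_injective) hD₀inf
  -- Eset and Dset are disjoint
  have hdisj : ∀ y, y ∈ Eset → y ∉ Dset := by
    intro y hyE hyD
    have hv₀D : ReachAvoid G S' v₀ (φ xv) := (ReachAvoid.symm hyE).trans hyD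
    have hsub : Eset ⊆ Dset := fun z hz => hz.trans hv₀D
    exact hEinf (hDfin.subset hsub)
  -- Dset is strictly contained in Cset
  have hxS' : xv ∈ S' := by
    simp only [hS'def, Set.mem_setOf_eq, SimpleGraph.dist_self]; omega
  have hDsub : Dset ⊆ Cset \ {xv} := by
    intro y hy
    have hyE : y ∉ Eset := fun h => hdisj y h hy
    have hyC : y ∈ Cset := by
      rcases cover y with h | h
      · exact absurd h hyE
      · exact h
    refine ⟨hyC, ?_⟩
    intro hyx
    rw [Set.mem_singleton_iff] at hyx
    exact hy.notMem_left (hyx ▸ hxS')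
  have hxD : xv ∉ Dset := fun h => (hDsub h).2 rfl
  have hss : Dset ⊂ Cset :=
    (Set.ssubset_iff_of_subset (hDsub.trans Set.diff_subset)).2 ⟨xv, hxC, hxD⟩
  have hlt := Set.ncard_lt_ncard hss hCfin
  omega

end Aux

/-- In a connected, locally finite, vertex-transitive, one-ended graph, every
vertex lying in a finite connected component of the complement of the ball
`B(v₀, r)` is at distance at most `2r` from `v₀`. -/
theorem finite_component_in_double_ball
    {V : Type*} (G : SimpleGraph V)
    (hconn : G.Connected)
    (hlf : ∀ v : V, (G.neighborSet v).Finite)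
    (hvt : VertexTransitive G)
    (hoe : OneEnded G)
    (v₀ : V) (r : ℕ)
    (x : ↥({u : V | G.dist v₀ u ≤ r}ᶜ))
    (hfin : (((G.induce {u : V | G.dist v₀ u ≤ r}ᶜ).connectedComponentMk x).supp).Finite) :
    G.dist v₀ (x : V) ≤ 2 * r := by
  by_contra hgt
  push_neg at hgt
  obtain ⟨φ, hφ⟩ := hvt v₀ (x : V)
  exact aux_contra G hconn hlf hoe v₀ (x : V) r φ hφ
    (by rw [cset_eq_image]; exact hfin.image _) hgt
end

section
/- Every finitely generated one-ended group has linear end-depth; more precisely, the end-depth function of its Cayley graph satisfies V₀(r) ≤ 2r. Concretely: let Γ be a group generated by a finite set S whose Cayley graph is one-ended, let d be the word metric, and let r be a natural number. Then any two elements g, h ∈ Γ with d(1,g) > 2r and d(1,h) > 2r can be joined by an edge path in the Cayley graph all of whose vertices u satisfy d(1,u) > r. -/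
open SimpleGraph

namespace EndDepthAux

variable {Γ : Type*} [Group Γ] {S : Set Γ}

lemma adj_mul (a : Γ) {g h : Γ} :
    (cayleyGraph Γ S).Adj (a * g) (a * h) ↔ (cayleyGraph Γ S).Adj g h := by
  show (a * g ≠ a * h ∧ _) ↔ (g ≠ h ∧ _)
  simp [mul_assoc, ne_eq, mul_right_inj]

/-- Left multiplication as an automorphism of the Cayley graph. -/
def mulIso (a : Γ) : cayleyGraph Γ S ≃g cayleyGraph Γ S where
  toEquiv := Equiv.mulLeft a
  map_rel_iff' := by intro g h; exact adj_mul a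

lemma reachable_mul (a : Γ) {x y : Γ} (h : (cayleyGraph Γ S).Reachable x y) :
    (cayleyGraph Γ S).Reachable (a * x) (a * y) :=
  h.map (mulIso a).toHom

lemma cayley_connected (hgen : Subgroup.closure S = ⊤) : (cayleyGraph Γ S).Connected := by
  rw [connected_iff_exists_forall_reachable]
  refine ⟨1, fun w => ?_⟩
  have hw : w ∈ Subgroup.closure S := hgen ▸ Subgroup.mem_top w
  induction hw using Subgroup.closure_induction with
  | mem s hs =>
      by_cases h1 : s = 1
      · subst h1; exact Reachable.refl _
      · exact Adj.reachable ⟨fun h => h1 h.symm, by simpa using Or.inl hs⟩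
  | one => exact Reachable.refl _
  | mul x y hx hy ihx ihy =>
      exact ihx.trans (by simpa using reachable_mul x ihy)
  | inv x hx ihx =>
      have := reachable_mul x⁻¹ ihx
      simpa using this.symm

lemma dist_mul (hc : (cayleyGraph Γ S).Connected) (a x y : Γ) :
    (cayleyGraph Γ S).dist (a * x) (a * y) = (cayleyGraph Γ S).dist x y := by
  have key : ∀ b u w : Γ,
      (cayleyGraph Γ S).dist (b * u) (b * w) ≤ (cayleyGraph Γ S).dist u w := by
    intro b u w
    obtain ⟨p, hp⟩ := hc.exists_walk_length_eq_dist u w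
    calc (cayleyGraph Γ S).dist (b * u) (b * w) ≤ (p.map (mulIso b).toHom).length :=
          dist_le _
      _ = p.length := Walk.length_map _ _
      _ = _ := hp
  refine le_antisymm (key a x y) ?_
  have := key a⁻¹ (a * x) (a * y)
  simpa using this

open Pointwise

lemma walk_mem_pow {G : SimpleGraph Γ} (T : Set Γ) (hT : ∀ {x y : Γ}, G.Adj x y → x⁻¹ * y ∈ T) :
    ∀ {x y : Γ} (p : G.Walk x y), x⁻¹ * y ∈ T ^ p.length := by
  intro x y p
  induction p with
  | nil => simp
  | @cons x z y h q ih =>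
      have hxy : x⁻¹ * y = (x⁻¹ * z) * (z⁻¹ * y) := by group
      rw [Walk.length_cons, pow_succ', hxy]
      exact Set.mul_mem_mul (hT h) ih

lemma ball_finite (hSfin : S.Finite) (hc : (cayleyGraph Γ S).Connected) (n : ℕ) :
    {u : Γ | (cayleyGraph Γ S).dist 1 u ≤ n}.Finite := by
  set T : Set Γ := S ∪ S⁻¹ with hTdef
  have hTfin : T.Finite := hSfin.union hSfin.inv
  have hpow : ∀ m : ℕ, (T ^ m).Finite := by
    intro m
    induction m with
    | zero => simpa using Set.finite_singleton (1 : Γ)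
    | succ k ih => rw [pow_succ]; exact ih.mul hTfin
  apply Set.Finite.subset (Set.Finite.biUnion (Set.finite_Iic n) fun m _ => hpow m)
  intro u hu
  obtain ⟨p, hp⟩ := hc.exists_walk_length_eq_dist 1 u
  have := walk_mem_pow (G := cayleyGraph Γ S) T (fun h => h.2) p
  simp only [inv_one, one_mul] at this
  exact Set.mem_biUnion (by simpa [hp] using hu) this

lemma exists_adj_dist {V : Type*} {G : SimpleGraph V} (hc : G.Connected) {x y : V} (hxy : y ≠ x) :
    ∃ z, G.Adj y z ∧ G.dist x z + 1 = G.dist x y := by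
  obtain ⟨p, hp⟩ := hc.exists_walk_length_eq_dist y x
  cases p with
  | nil => exact absurd rfl hxy
  | @cons _ z _ hadj q =>
      refine ⟨z, hadj, ?_⟩
      have h1 : G.dist x z ≤ q.length := by
        rw [G.dist_comm]; exact dist_le q
      have h2 : G.dist x y ≤ G.dist x z + G.dist z y := hc.dist_triangle
      have h3 : G.dist z y ≤ 1 := by
        rw [G.dist_comm]; exact (dist_le (Walk.cons hadj Walk.nil)).trans (by simp)
      have h4 : q.length + 1 = G.dist x y := by
        rw [G.dist_comm]; simpa using hp
      omega

section Generic
variable {V : Type*} {G : SimpleGraph V}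

lemma reachable_induce_of_walk {K : Set V} :
    ∀ {x y : V} (p : G.Walk x y) (_ : ∀ u ∈ p.support, u ∈ K)
      (hx : x ∈ K) (hy : y ∈ K),
      (G.induce K).Reachable ⟨x, hx⟩ ⟨y, hy⟩ := by
  intro x y p
  induction p with
  | nil => intro _ hx hy; exact Reachable.refl _
  | @cons x z y h q ih =>
      intro hs hx hy
      have hz : z ∈ K := hs z (by simp)
      have hadj : (G.induce K).Adj ⟨x, hx⟩ ⟨z, hz⟩ := h
      exact hadj.reachable.trans (ih (fun u hu => hs u (by simp [hu])) hz hy)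

lemma mk_eq_of_walk_support {K : Set V} {x y : ↥K} (q : (G.induce K).Walk x y) :
    ∀ z ∈ q.support, (G.induce K).connectedComponentMk z = (G.induce K).connectedComponentMk x := by
  classical
  intro z hz
  exact ConnectedComponent.sound ((q.takeUntil z hz).reverse.reachable)

lemma supp_transfer {V' : Type*} {G' : SimpleGraph V'} (φ : G ≃g G') (x : V) :
    (G'.connectedComponentMk (φ x)).supp = φ '' (G.connectedComponentMk x).supp := by
  ext y
  simp only [ConnectedComponent.mem_supp_iff, ConnectedComponent.eq, Set.mem_image]
  constructor
  · intro hr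
    refine ⟨φ.symm y, ?_, φ.apply_symm_apply y⟩
    have : G'.Reachable (φ (φ.symm y)) (φ x) := by rwa [φ.apply_symm_apply]
    exact Iso.reachable_iff.mp this
  · rintro ⟨z, hz, rfl⟩
    exact Reachable.map φ.toHom hz

end Generic

section Generic2
variable {V : Type*} {G : SimpleGraph V}

lemma reach_center (hc : G.Connected) (o : V) {K : Set V} :
    ∀ (n : ℕ) (x : V), G.dist o x ≤ n →
      ∀ (hmem : ∀ w, G.dist o w ≤ G.dist o x → w ∈ K),
      (G.induce K).Reachable ⟨x, hmem x le_rfl⟩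
        ⟨o, hmem o (by simp [SimpleGraph.dist_self])⟩ := by
  intro n
  induction n with
  | zero =>
      intro x hx hmem
      have hxo : x = o := ((hc o x).dist_eq_zero_iff.mp (by omega)).symm
      subst hxo
      exact Reachable.refl _
  | succ k ih =>
      intro x hx hmem
      by_cases hxo : x = o
      · subst hxo; exact Reachable.refl _
      · obtain ⟨z, hadj, hz⟩ := exists_adj_dist hc hxo
        have hzle : G.dist o z ≤ G.dist o x := by omega
        have hmem' : ∀ w, G.dist o w ≤ G.dist o z → w ∈ K :=
          fun w hw => hmem w (hw.trans hzle)
        have hedge : (G.induce K).Adj ⟨x, hmem x le_rfl⟩ ⟨z, hmem z hzle⟩ := hadj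
        exact hedge.reachable.trans (ih z (by omega) hmem')

lemma reach_to_boundary (hc : G.Connected) (o : V) (r : ℕ) {K : Set V}
    (hKiff : ∀ u, u ∈ K ↔ r < G.dist o u) :
    ∀ (n : ℕ) (x : V) (hx : x ∈ K), G.dist o x ≤ n →
      ∃ (c b : V) (hcK : c ∈ K), G.dist o b ≤ r ∧ G.Adj c b ∧
        (G.induce K).Reachable ⟨x, hx⟩ ⟨c, hcK⟩ := by
  intro n
  induction n with
  | zero =>
      intro x hx hn
      exact absurd ((hKiff x).mp hx) (by omega)
  | succ k ih =>
      intro x hx hn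
      have hdx : r < G.dist o x := (hKiff x).mp hx
      have hxo : x ≠ o := by
        intro h; subst h; simp [SimpleGraph.dist_self] at hdx
      obtain ⟨z, hadj, hz⟩ := exists_adj_dist hc hxo
      by_cases hzr : G.dist o z ≤ r
      · exact ⟨x, z, hx, hzr, hadj, Reachable.refl _⟩
      · have hzK : z ∈ K := (hKiff z).mpr (by omega)
        obtain ⟨c, b, hcK, hbr, hcb, hreach⟩ := ih z hzK (by omega)
        have hedge : (G.induce K).Adj ⟨x, hx⟩ ⟨z, hzK⟩ := hadj
        exact ⟨c, b, hcK, hbr, hcb, hedge.reachable.trans hreach⟩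

end Generic2

/-- The ball of radius `r` around `o` in the Cayley graph. -/
def cball (S : Set Γ) (o : Γ) (r : ℕ) : Set Γ := {u | (cayleyGraph Γ S).dist o u ≤ r}

lemma mem_cball_compl {o u : Γ} {r : ℕ} :
    u ∈ (cball S o r)ᶜ ↔ r < (cayleyGraph Γ S).dist o u := by
  simp [cball, Set.mem_compl_iff, not_le]

/-- Left translation by `v` as an isomorphism between the complements of the balls
`B(1,r)` and `B(v,r)`. -/
def transIso (hc : (cayleyGraph Γ S).Connected) (v : Γ) (r : ℕ) :
    ((cayleyGraph Γ S).induce (cball S 1 r)ᶜ) ≃g ((cayleyGraph Γ S).induce (cball S v r)ᶜ) where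
  toFun x := ⟨v * x.1, by
    rw [mem_cball_compl]
    have hd : (cayleyGraph Γ S).dist v (v * x.1) = (cayleyGraph Γ S).dist 1 x.1 := by
      simpa using dist_mul hc v 1 x.1
    rw [hd]
    exact mem_cball_compl.mp x.2⟩
  invFun y := ⟨v⁻¹ * y.1, by
    rw [mem_cball_compl]
    have hd : (cayleyGraph Γ S).dist 1 (v⁻¹ * y.1) = (cayleyGraph Γ S).dist v y.1 := by
      simpa using dist_mul hc v⁻¹ v y.1
    rw [hd]
    exact mem_cball_compl.mp y.2⟩
  left_inv x := Subtype.ext (by simp)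
  right_inv y := Subtype.ext (by simp)
  map_rel_iff' := by
    intro x y
    exact adj_mul v

lemma transIso_apply (hc : (cayleyGraph Γ S).Connected) (v : Γ) (r : ℕ)
    (x : ↥(cball S 1 r)ᶜ) : (transIso hc v r x).1 = v * x.1 := rfl

lemma mem_infinite_component
    (hSfin : S.Finite) (hgen : Subgroup.closure S = ⊤)
    (hoe : ∀ K : Set Γ, K.Finite →
      ∃! C : ((cayleyGraph Γ S).induce Kᶜ).ConnectedComponent, C.supp.Infinite)
    (r : ℕ)
    {C : ((cayleyGraph Γ S).induce (cball S 1 r)ᶜ).ConnectedComponent}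
    (hCinf : C.supp.Infinite)
    (hCuniq : ∀ C' : ((cayleyGraph Γ S).induce (cball S 1 r)ᶜ).ConnectedComponent,
      C'.supp.Infinite → C' = C)
    (v : Γ) (hv : 2 * r < (cayleyGraph Γ S).dist 1 v)
    (hvB : v ∈ (cball S 1 r)ᶜ) :
    (⟨v, hvB⟩ : ↥(cball S 1 r)ᶜ) ∈ C.supp := by
  by_contra hvC
  have hc : (cayleyGraph Γ S).Connected := cayley_connected hgen
  have hBfin : (cball S 1 r).Finite := ball_finite hSfin hc r
  have hmemB : ∀ u : Γ, u ∈ (cball S 1 r)ᶜ ↔ r < (cayleyGraph Γ S).dist 1 u :=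
    fun u => mem_cball_compl
  -- basic facts about the ball around `v`
  have hK₂sub : ∀ u ∈ cball S v r, r < (cayleyGraph Γ S).dist 1 u := by
    intro u hu
    have h1 : (cayleyGraph Γ S).dist 1 v ≤
        (cayleyGraph Γ S).dist 1 u + (cayleyGraph Γ S).dist u v := hc.dist_triangle
    have h2 : (cayleyGraph Γ S).dist u v = (cayleyGraph Γ S).dist v u :=
      (cayleyGraph Γ S).dist_comm
    have h3 : (cayleyGraph Γ S).dist v u ≤ r := hu
    omega
  have hK₂fin : (cball S v r).Finite := by
    have himg : cball S v r = (fun b => v * b) '' (cball S 1 r) := by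
      ext u
      simp only [cball, Set.mem_setOf_eq, Set.mem_image]
      constructor
      · intro hu
        refine ⟨v⁻¹ * u, ?_, by simp⟩
        have : (cayleyGraph Γ S).dist 1 (v⁻¹ * u) = (cayleyGraph Γ S).dist v u := by
          simpa using dist_mul hc v⁻¹ v u
        simpa [this] using hu
      · rintro ⟨b, hb, rfl⟩
        have : (cayleyGraph Γ S).dist v (v * b) = (cayleyGraph Γ S).dist 1 b := by
          simpa using dist_mul hc v 1 b
        simpa [this] using hb
    rw [himg]
    exact hBfin.image _
  -- every point of the ball around `v` is in the same component (of `Bᶜ`) as `v`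
  have hK₂mk : ∀ u (hu : u ∈ cball S v r) (huB : u ∈ (cball S 1 r)ᶜ),
      ((cayleyGraph Γ S).induce (cball S 1 r)ᶜ).connectedComponentMk ⟨u, huB⟩ =
      ((cayleyGraph Γ S).induce (cball S 1 r)ᶜ).connectedComponentMk ⟨v, hvB⟩ := by
    intro u hu huB
    have hmem : ∀ w, (cayleyGraph Γ S).dist v w ≤ (cayleyGraph Γ S).dist v u →
        w ∈ (cball S 1 r)ᶜ := by
      intro w hw
      exact (hmemB w).mpr (hK₂sub w (le_trans hw hu))
    exact ConnectedComponent.sound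
      (reach_center hc v ((cayleyGraph Γ S).dist v u) u le_rfl hmem)
  -- the support of C, as a subset of Γ
  have hCS_K₂ : ∀ (x : ↥(cball S 1 r)ᶜ), x ∈ C.supp → x.1 ∉ cball S v r := by
    intro x hx hmem
    have h1 := hK₂mk x.1 hmem x.2
    rw [ConnectedComponent.mem_supp_iff] at hx
    apply hvC
    rw [ConnectedComponent.mem_supp_iff, ← h1]
    exact hx
  have hBK₂ : ∀ u ∈ cball S 1 r, u ∉ cball S v r := by
    intro u hu hk
    have := hK₂sub u hk
    have : (cayleyGraph Γ S).dist 1 u ≤ r := hu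
    omega
  have h1K₂ : (1 : Γ) ∈ (cball S v r)ᶜ := by
    rw [mem_cball_compl]
    have : (cayleyGraph Γ S).dist v 1 = (cayleyGraph Γ S).dist 1 v :=
      (cayleyGraph Γ S).dist_comm
    omega
  -- the component of `1` in the complement of the ball around `v`
  set D := ((cayleyGraph Γ S).induce (cball S v r)ᶜ).connectedComponentMk ⟨1, h1K₂⟩ with hD
  have hBD : ∀ b (hb : b ∈ cball S 1 r) (hbK : b ∈ (cball S v r)ᶜ),
      ((cayleyGraph Γ S).induce (cball S v r)ᶜ).connectedComponentMk ⟨b, hbK⟩ = D := by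
    intro b hb hbK
    have hmem : ∀ w, (cayleyGraph Γ S).dist 1 w ≤ (cayleyGraph Γ S).dist 1 b →
        w ∈ (cball S v r)ᶜ := by
      intro w hw
      have hwB : w ∈ cball S 1 r := le_trans hw hb
      exact fun hmem => hBK₂ w hwB hmem
    exact ConnectedComponent.sound
      (reach_center hc 1 ((cayleyGraph Γ S).dist 1 b) b le_rfl hmem)
  -- a boundary edge from C to the ball B(1,r)
  obtain ⟨x₀, hx₀⟩ := C.exists_rep
  obtain ⟨c, b, hcK, hbr, hcb, hreach⟩ :=
    reach_to_boundary hc 1 r hmemB ((cayleyGraph Γ S).dist 1 x₀.1) x₀.1 x₀.2 le_rfl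
  have hcC : ((cayleyGraph Γ S).induce (cball S 1 r)ᶜ).connectedComponentMk ⟨c, hcK⟩ = C := by
    rw [← hx₀]
    exact ConnectedComponent.sound hreach.symm
  have hcSupp : (⟨c, hcK⟩ : ↥(cball S 1 r)ᶜ) ∈ C.supp := by
    rw [ConnectedComponent.mem_supp_iff]; exact hcC
  have hcK₂ : c ∈ (cball S v r)ᶜ := fun hmem => hCS_K₂ ⟨c, hcK⟩ hcSupp hmem
  have hbB : b ∈ cball S 1 r := hbr
  have hbK₂ : b ∈ (cball S v r)ᶜ := fun hmem => hBK₂ b hbB hmem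
  have hcD : ((cayleyGraph Γ S).induce (cball S v r)ᶜ).connectedComponentMk ⟨c, hcK₂⟩ = D := by
    have hedge : ((cayleyGraph Γ S).induce (cball S v r)ᶜ).Adj ⟨c, hcK₂⟩ ⟨b, hbK₂⟩ := hcb
    exact (ConnectedComponent.sound hedge.reachable).trans (hBD b hbB hbK₂)
  -- everything in C's support lies in D
  have hCD : ∀ (x : ↥(cball S 1 r)ᶜ), x ∈ C.supp → ∀ (hxK : x.1 ∈ (cball S v r)ᶜ),
      ((cayleyGraph Γ S).induce (cball S v r)ᶜ).connectedComponentMk ⟨x.1, hxK⟩ = D := by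
    intro x hx hxK
    have hx' : ((cayleyGraph Γ S).induce (cball S 1 r)ᶜ).connectedComponentMk x = C := by
      rwa [ConnectedComponent.mem_supp_iff] at hx
    have hr1 : ((cayleyGraph Γ S).induce (cball S 1 r)ᶜ).Reachable x ⟨c, hcK⟩ :=
      ConnectedComponent.exact (hx'.trans hcC.symm)
    obtain ⟨q⟩ := hr1
    have hsupp : ∀ z ∈ q.support, z ∈ C.supp := by
      intro z hz
      rw [ConnectedComponent.mem_supp_iff]
      exact (mk_eq_of_walk_support q z hz).trans hx'
    have hpsupp : ∀ u ∈ (q.map (SimpleGraph.Embedding.induce _).toHom).support,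
        u ∈ (cball S v r)ᶜ := by
      intro u hu
      rw [Walk.support_map] at hu
      obtain ⟨z, hz, rfl⟩ := List.mem_map.mp hu
      exact fun hmem => hCS_K₂ z (hsupp z hz) hmem
    have hre := reachable_induce_of_walk _ hpsupp hxK hcK₂
    exact (ConnectedComponent.sound hre).trans hcD
  -- D is infinite
  have hDinf : D.supp.Infinite := by
    haveI := hCinf.to_subtype
    apply Set.infinite_of_injective_forall_mem
      (f := fun (z : ↥C.supp) =>
        (⟨z.1.1, fun hmem => hCS_K₂ z.1 z.2 hmem⟩ : ↥(cball S v r)ᶜ))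
    · intro z z' heq
      have h2 : z.1.1 = z'.1.1 := by
        have := congrArg Subtype.val heq
        simpa using this
      exact Subtype.ext (Subtype.ext h2)
    · intro z
      rw [ConnectedComponent.mem_supp_iff]
      exact hCD z.1 z.2 _
  -- identify D with the translate of C
  have hφC : (((cayleyGraph Γ S).induce (cball S v r)ᶜ).connectedComponentMk
      (transIso hc v r x₀)).supp = (transIso hc v r) '' C.supp := by
    rw [← hx₀]
    exact supp_transfer (transIso hc v r) x₀
  have hφCinf : (((cayleyGraph Γ S).induce (cball S v r)ᶜ).connectedComponentMk
      (transIso hc v r x₀)).supp.Infinite := by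
    rw [hφC]
    exact hCinf.image ((transIso hc v r).injective.injOn)
  obtain ⟨C₂, hC₂inf, hC₂u⟩ := hoe (cball S v r) hK₂fin
  have hDC₂ : D = C₂ := hC₂u D hDinf
  have hφC₂ : ((cayleyGraph Γ S).induce (cball S v r)ᶜ).connectedComponentMk
      (transIso hc v r x₀) = C₂ := hC₂u _ hφCinf
  have hsuppeq : D.supp = (transIso hc v r) '' C.supp := by
    rw [hDC₂, ← hφC₂]
    exact hφC
  have hDS : Subtype.val '' D.supp = (fun u => v * u) '' (Subtype.val '' C.supp) := by
    rw [hsuppeq, Set.image_image, Set.image_image]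
    rfl
  -- B ∪ CS ⊆ DS
  have hBDS : ∀ u ∈ cball S 1 r, u ∈ Subtype.val '' D.supp := by
    intro u hu
    refine ⟨⟨u, fun hmem => hBK₂ u hu hmem⟩, ?_, rfl⟩
    rw [ConnectedComponent.mem_supp_iff]
    exact hBD u hu _
  have hCSDS : ∀ (x : ↥(cball S 1 r)ᶜ), x ∈ C.supp → x.1 ∈ Subtype.val '' D.supp := by
    intro x hx
    refine ⟨⟨x.1, fun hmem => hCS_K₂ x hx hmem⟩, ?_, rfl⟩
    rw [ConnectedComponent.mem_supp_iff]
    exact hCD x hx _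
  -- finitely many components
  haveI hCCfin : Finite ((cayleyGraph Γ S).induce (cball S 1 r)ᶜ).ConnectedComponent := by
    set A : Set Γ :=
      {c' | ∃ b', (cayleyGraph Γ S).dist 1 b' ≤ r ∧ (cayleyGraph Γ S).Adj c' b'} with hA
    have hAfin : A.Finite := by
      apply Set.Finite.subset (Set.Finite.biUnion hBfin
        (fun b' _ => ((hSfin.union hSfin.inv).image (fun s => b' * s))))
      rintro c' ⟨b', hb', hadj⟩
      have hb'B : b' ∈ cball S 1 r := hb'
      exact Set.mem_biUnion hb'B ⟨b'⁻¹ * c', hadj.symm.2, by simp⟩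
    have hrep : ∀ cc : ((cayleyGraph Γ S).induce (cball S 1 r)ᶜ).ConnectedComponent,
        ∃ x : ↥(cball S 1 r)ᶜ,
          ((cayleyGraph Γ S).induce (cball S 1 r)ᶜ).connectedComponentMk x = cc ∧ x.1 ∈ A := by
      intro cc
      obtain ⟨x₁, hx₁⟩ := cc.exists_rep
      obtain ⟨c', b', hcK', hbr', hcb', hre'⟩ :=
        reach_to_boundary hc 1 r hmemB ((cayleyGraph Γ S).dist 1 x₁.1) x₁.1 x₁.2 le_rfl
      exact ⟨⟨c', hcK'⟩, by rw [← hx₁]; exact ConnectedComponent.sound hre'.symm,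
        ⟨b', hbr', hcb'⟩⟩
    choose f hf1 hf2 using hrep
    haveI := hAfin.to_subtype
    apply Finite.of_injective (fun cc => (⟨(f cc).1, hf2 cc⟩ : ↥A))
    intro cc cc' heq
    have h3 : (f cc).1 = (f cc').1 := by
      have := congrArg Subtype.val heq
      simpa using this
    rw [← hf1 cc, ← hf1 cc', Subtype.ext h3]
  -- F, the union of the finite components
  set F : Set Γ := Subtype.val '' (C.suppᶜ) with hF
  have hFsub : F ⊆ (cball S 1 r)ᶜ := by
    rintro _ ⟨x, hx, rfl⟩
    exact x.2
  have hFfin : F.Finite := by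
    apply Set.Finite.image
    have hsub : (C.suppᶜ : Set ↥(cball S 1 r)ᶜ) ⊆
        ⋃ (cc : ((cayleyGraph Γ S).induce (cball S 1 r)ᶜ).ConnectedComponent)
          (_ : cc ≠ C), cc.supp := by
      intro z hz
      have hzne : ((cayleyGraph Γ S).induce (cball S 1 r)ᶜ).connectedComponentMk z ≠ C := by
        intro h3
        exact hz (by rw [ConnectedComponent.mem_supp_iff]; exact h3)
      exact Set.mem_biUnion hzne (by rw [ConnectedComponent.mem_supp_iff])
    refine Set.Finite.subset (Set.Finite.biUnion (Set.toFinite _) ?_) hsub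
    intro cc hcc
    by_contra hinf
    exact hcc (hCuniq cc hinf)
  have hnotCS : ∀ u : Γ, u ∉ Subtype.val '' C.supp ↔ u ∈ cball S 1 r ∪ F := by
    intro u
    constructor
    · intro hu
      by_cases hB : u ∈ cball S 1 r
      · exact Or.inl hB
      · have huB : u ∈ (cball S 1 r)ᶜ := hB
        refine Or.inr ⟨⟨u, huB⟩, ?_, rfl⟩
        intro hmem
        exact hu ⟨⟨u, huB⟩, hmem, rfl⟩
    · rintro (hB | hF') hu
      · obtain ⟨x, hx, rfl⟩ := hu
        exact x.2 hB
      · obtain ⟨x, hx, hxe⟩ := hF'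
        obtain ⟨x', hx', hval⟩ := hu
        have hxx : x' = x := Subtype.ext (hval.trans hxe.symm)
        exact hx (hxx ▸ hx')
  -- translation by v maps B ∪ F into F
  have key : ∀ u ∈ cball S 1 r ∪ F, v * u ∈ F := by
    intro u hu
    have hunCS : u ∉ Subtype.val '' C.supp := (hnotCS u).mpr hu
    have hvuDS : v * u ∉ Subtype.val '' D.supp := by
      rw [hDS]
      rintro ⟨w, hwCS, hweq⟩
      have hwu : w = u := mul_left_cancel hweq
      exact hunCS (hwu ▸ hwCS)
    have h1 : v * u ∉ cball S 1 r := fun hB => hvuDS (hBDS _ hB)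
    have h2 : v * u ∉ Subtype.val '' C.supp := by
      intro hCS'
      obtain ⟨x, hx, hxe⟩ := hCS'
      exact hvuDS (hxe ▸ hCSDS x hx)
    rcases (hnotCS (v * u)).mp h2 with hB | hF'
    · exact absurd hB h1
    · exact hF'
  -- cardinality contradiction
  have hBFfin : (cball S 1 r ∪ F).Finite := hBfin.union hFfin
  have himg : ((fun u => v * u) '' (cball S 1 r ∪ F)) ⊆ F := by
    rintro _ ⟨u, hu, rfl⟩
    exact key u hu
  have hle : (cball S 1 r ∪ F).ncard ≤ F.ncard := by
    have h4 := Set.ncard_le_ncard himg hFfin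
    rwa [Set.ncard_image_of_injective _ (mul_right_injective v)] at h4
  have h1B : (1 : Γ) ∈ cball S 1 r := by
    show (cayleyGraph Γ S).dist 1 1 ≤ r
    simp [SimpleGraph.dist_self]
  have h1F : (1 : Γ) ∉ F := fun h1 => (hFsub h1) h1B
  have hlt : F.ncard < (cball S 1 r ∪ F).ncard := by
    apply Set.ncard_lt_ncard _ hBFfin
    exact ⟨Set.subset_union_right, fun hsub => h1F (hsub (Or.inl h1B))⟩
  omega

end EndDepthAux

/-- Every finitely generated one-ended group has linear end-depth: the end-depth
function of its Cayley graph satisfies `V₀(r) ≤ 2r`. Concretely, any two elements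
at word-metric distance greater than `2r` from the identity can be joined by an
edge path in the Cayley graph lying entirely outside the ball `B(1, r)`. -/
theorem end_depth_linear
    {Γ : Type*} [Group Γ]
    (S : Set Γ) (hSfin : S.Finite) (hgen : Subgroup.closure S = ⊤)
    (hoe : OneEnded (cayleyGraph Γ S))
    (r : ℕ) (g h : Γ)
    (hg : 2 * r < (cayleyGraph Γ S).dist 1 g)
    (hh : 2 * r < (cayleyGraph Γ S).dist 1 h) :
    ∃ p : (cayleyGraph Γ S).Walk g h,
      ∀ u ∈ p.support, r < (cayleyGraph Γ S).dist 1 u := by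
  classical
  have hc : (cayleyGraph Γ S).Connected := EndDepthAux.cayley_connected hgen
  have hBfin : (EndDepthAux.cball S 1 r).Finite := EndDepthAux.ball_finite hSfin hc r
  obtain ⟨C, hCinf, hCuniq⟩ := hoe (EndDepthAux.cball S 1 r) hBfin
  have hgB : g ∈ (EndDepthAux.cball S 1 r)ᶜ :=
    EndDepthAux.mem_cball_compl.mpr (by omega)
  have hhB : h ∈ (EndDepthAux.cball S 1 r)ᶜ :=
    EndDepthAux.mem_cball_compl.mpr (by omega)
  have hgC : (⟨g, hgB⟩ : ↥(EndDepthAux.cball S 1 r)ᶜ) ∈ C.supp :=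
    EndDepthAux.mem_infinite_component hSfin hgen hoe r hCinf hCuniq g hg hgB
  have hhC : (⟨h, hhB⟩ : ↥(EndDepthAux.cball S 1 r)ᶜ) ∈ C.supp :=
    EndDepthAux.mem_infinite_component hSfin hgen hoe r hCinf hCuniq h hh hhB
  rw [ConnectedComponent.mem_supp_iff] at hgC hhC
  have hre : ((cayleyGraph Γ S).induce (EndDepthAux.cball S 1 r)ᶜ).Reachable
      ⟨g, hgB⟩ ⟨h, hhB⟩ := ConnectedComponent.exact (hgC.trans hhC.symm)
  obtain ⟨q⟩ := hre
  refine ⟨q.map (SimpleGraph.Embedding.induce _).toHom, ?_⟩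
  intro u hu
  replace hu : u ∈ (q.map (SimpleGraph.Embedding.induce (G := cayleyGraph Γ S) (EndDepthAux.cball S 1 r)ᶜ).toHom).support := hu
  rw [Walk.support_map] at hu
  obtain ⟨z, hz, rfl⟩ := List.mem_map.mp hu
  exact EndDepthAux.mem_cball_compl.mp z.2
end
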